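/- arXiv:2512.00838 — 4 statements merged into one kernel-verified Lean document; each statement's English description precedes it below -/
import Mathlib

section
/- Let S and A be nonempty finite types, let P : S → A → S → ℝ satisfy P s a s' ≥ 0 and ∑_{s' ∈ S} P s a s' = 1 for all s, a, let J : S → A → ℝ, and let γ ∈ [0, 1). Define the Bellman optimality operator T : (S → ℝ) → (S → ℝ) by (T V)(s) = min_{a ∈ A} (J(s,a) + γ · ∑_{s' ∈ S} P s a s' · V(s')). Then for all U, V : S → ℝ, sup_{s ∈ S} |(T U)(s) − (T V)(s)| ≤ γ · sup_{s ∈ S} |U(s) − V(s)|; that is, T is a γ-contraction in the supremum norm on S → ℝ. -/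
lemma inf'_abs_sub_le {A : Type*} [Fintype A] [Nonempty A]
    (f g : A → ℝ) (c : ℝ) (h : ∀ a, |f a - g a| ≤ c) :
    |Finset.univ.inf' Finset.univ_nonempty f - Finset.univ.inf' Finset.univ_nonempty g| ≤ c := by
  rw [abs_sub_le_iff]
  constructor
  · obtain ⟨a, _, ha⟩ := Finset.exists_mem_eq_inf' Finset.univ_nonempty g
    calc Finset.univ.inf' Finset.univ_nonempty f - Finset.univ.inf' Finset.univ_nonempty g
        ≤ f a - g a := by
          rw [ha]
          gcongr
          exact Finset.inf'_le _ (Finset.mem_univ a)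
      _ ≤ c := (abs_le.mp (h a)).2.trans_eq rfl |>.trans le_rfl
  · obtain ⟨a, _, ha⟩ := Finset.exists_mem_eq_inf' Finset.univ_nonempty f
    calc Finset.univ.inf' Finset.univ_nonempty g - Finset.univ.inf' Finset.univ_nonempty f
        ≤ g a - f a := by
          rw [ha]
          gcongr
          exact Finset.inf'_le _ (Finset.mem_univ a)
      _ ≤ c := by have := abs_le.mp (h a); linarith [this.1]

/-- The Bellman optimality operator of a finite MDP is a `γ`-contraction in
the supremum norm on `S → ℝ`. -/
theorem bellman_operator_contraction
    {S A : Type*} [Fintype S] [Nonempty S] [Fintype A] [Nonempty A]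
    (P : S → A → S → ℝ)
    (hP0 : ∀ s a s', 0 ≤ P s a s')
    (hP1 : ∀ s a, ∑ s', P s a s' = 1)
    (J : S → A → ℝ)
    (γ : ℝ) (hγ0 : 0 ≤ γ) (hγ1 : γ < 1)
    (T : (S → ℝ) → (S → ℝ))
    (hT : ∀ V s, T V s = Finset.univ.inf' Finset.univ_nonempty
        (fun a : A => J s a + γ * ∑ s', P s a s' * V s'))
    (U V : S → ℝ) :
    (⨆ s : S, |T U s - T V s|) ≤ γ * ⨆ s : S, |U s - V s| := by
  set M := ⨆ s : S, |U s - V s| with hM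
  have hbdd : BddAbove (Set.range fun s : S => |U s - V s|) := Set.Finite.bddAbove (Set.finite_range _)
  have hUV : ∀ s', |U s' - V s'| ≤ M := fun s' => le_ciSup hbdd s'
  apply ciSup_le
  intro s
  rw [hT, hT]
  apply inf'_abs_sub_le
  intro a
  have h1 : (J s a + γ * ∑ s', P s a s' * U s') - (J s a + γ * ∑ s', P s a s' * V s')
      = γ * ∑ s', P s a s' * (U s' - V s') := by
    rw [Finset.mul_sum, Finset.mul_sum, Finset.mul_sum]
    ring_nf
    rw [← Finset.sum_sub_distrib]
  rw [h1, abs_mul, abs_of_nonneg hγ0]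
  gcongr
  calc |∑ s', P s a s' * (U s' - V s')| ≤ ∑ s', |P s a s' * (U s' - V s')| :=
        Finset.abs_sum_le_sum_abs _ _
    _ ≤ ∑ s' : S, P s a s' * M := by
        apply Finset.sum_le_sum
        intro s' _
        rw [abs_mul, abs_of_nonneg (hP0 s a s')]
        exact mul_le_mul_of_nonneg_left (hUV s') (hP0 s a s')
    _ = M := by rw [← Finset.sum_mul, hP1, one_mul]
end

section
/- Let ι be a nonempty finite index type and for each i ∈ ι let (S i, A i, P i, J i, γ) be a finite MDP with common discount factor γ ∈ [0,1). Form the product MDP with state space S = ∏ i, S i, action space A = ∏ i, A i, cost J(s,a) = ∑_{i} J i (s i) (a i), and transitions P s a s' = ∏_{i} P i (s i) (a i) (s' i), and let T denote its Bellman optimality operator and T_i the Bellman optimality operator of the i-th sub-MDP. Then for any family of functions V i : S i → ℝ, defining V : S → ℝ by V(s) = ∑_{i} V i (s i), one has (T V)(s) = ∑_{i} (T_i (V i)) (s i) for all s ∈ S. -/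
/-! Under a product of probability vectors the coordinates are independent, so the expected
value of an additively separable function is the sum of the expected values of its summands
under the marginals. Hence the one-step cost of a product action is a sum of terms each
depending on a single coordinate of the action, and the minimum over the product of the
action spaces is then taken coordinatewise. -/

open Finset

namespace Fintype

variable {ι R : Type*} [Fintype ι] [DecidableEq ι] [CommSemiring R] {S : ι → Type*}
  [∀ i, Fintype (S i)]

theorem sum_prod_mul_apply_eq_of_sum_eq_one (p : ∀ j, S j → R) {i : ι}
    (hp : ∀ j ≠ i, ∑ y, p j y = 1) (v : S i → R) :
    ∑ x : ∀ j, S j, (∏ j, p j (x j)) * v (x i) = ∑ y, p i y * v y := by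
  -- Absorbing `v` into the `i`-th factor makes the summand a product, so the sum factors.
  set q : ∀ j, S j → R := Function.update p i fun y => p i y * v y
  have hq_ne : ∀ j ∈ ({i}ᶜ : Finset ι), q j = p j := fun j hj =>
    Function.update_of_ne (by simpa using hj) _ _
  have hq_self : q i = fun y => p i y * v y := Function.update_self ..
  have hq : ∀ x : ∀ j, S j, (∏ j, p j (x j)) * v (x i) = ∏ j, q j (x j) := fun x => by
    rw [prod_eq_mul_prod_compl i, prod_eq_mul_prod_compl i,
      Finset.prod_congr rfl fun j hj => congrFun (hq_ne j hj) (x j), hq_self]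
    ring
  calc ∑ x : ∀ j, S j, (∏ j, p j (x j)) * v (x i)
      = ∏ j, ∑ y, q j y := by simp_rw [hq, prod_sum]
    _ = ∑ y, p i y * v y := by
      rw [prod_eq_mul_prod_compl i, hq_self,
        Finset.prod_congr rfl fun j hj => by rw [hq_ne j hj, hp j (by simpa using hj)],
        prod_const_one, mul_one]

theorem sum_prod_mul_sum_eq_of_sum_eq_one (p : ∀ j, S j → R) (hp : ∀ j, ∑ y, p j y = 1)
    (v : ∀ i, S i → R) :
    ∑ x : ∀ j, S j, (∏ j, p j (x j)) * ∑ i, v i (x i) = ∑ i, ∑ y, p i y * v i y := by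
  simp_rw [mul_sum]
  rw [sum_comm]
  exact Finset.sum_congr rfl fun i _ =>
    sum_prod_mul_apply_eq_of_sum_eq_one p (fun j _ => hp j) (v i)

end Fintype

theorem Finset.inf'_univ_pi_sum {ι M : Type*} [Fintype ι] [DecidableEq ι] [LinearOrder M]
    [AddCommMonoid M] [IsOrderedAddMonoid M] {A : ι → Type*} [∀ i, Fintype (A i)]
    [∀ i, Nonempty (A i)] (f : ∀ i, A i → M) :
    univ.inf' univ_nonempty (fun a : ∀ i, A i => ∑ i, f i (a i)) =
      ∑ i, univ.inf' univ_nonempty (f i) := by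
  refine le_antisymm ?_ (le_inf' _ _ fun a _ => sum_le_sum fun i _ => inf'_le _ (mem_univ _))
  choose a _ ha using fun i => exists_mem_eq_inf' univ_nonempty (f i)
  calc univ.inf' univ_nonempty (fun a : ∀ i, A i => ∑ i, f i (a i))
      ≤ ∑ i, f i (a i) := inf'_le _ (mem_univ a)
    _ = ∑ i, univ.inf' univ_nonempty (f i) := sum_congr rfl fun i _ => (ha i).symm

theorem product_bellman_decomposes_general
    {ι : Type*} [Fintype ι] [DecidableEq ι]
    (S A : ι → Type*)
    [∀ i, Fintype (S i)]
    [∀ i, Fintype (A i)] [∀ i, Nonempty (A i)]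
    (P : ∀ i, S i → A i → S i → ℝ)
    (hP1 : ∀ i, ∀ (x : S i) (b : A i), ∑ y : S i, P i x b y = 1)
    (J : ∀ i, S i → A i → ℝ)
    (γ : ℝ)
    (V : ∀ i, S i → ℝ) :
    ∀ s : ∀ i, S i,
      -- `(T V)(s)` for the product MDP, applied to `V(s) = ∑ i, Vᵢ (s i)`:
      Finset.univ.inf' Finset.univ_nonempty
          (fun a : ∀ i, A i =>
            (∑ i, J i (s i) (a i)) +
              γ * ∑ s' : ∀ i, S i,
                (∏ i, P i (s i) (a i) (s' i)) * ∑ i, V i (s' i)) =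
        -- `∑ i, (Tᵢ Vᵢ)(s i)` for the sub-MDPs:
        ∑ i, Finset.univ.inf' Finset.univ_nonempty
          (fun b : A i => J i (s i) b + γ * ∑ y : S i, P i (s i) b y * V i y) := by
  intro s
  rw [← inf'_univ_pi_sum]
  refine inf'_congr _ rfl fun a _ => ?_
  rw [Fintype.sum_prod_mul_sum_eq_of_sum_eq_one _ (fun i => hP1 i (s i) (a i)), mul_sum,
    ← sum_add_distrib]

/-- The Bellman optimality operator of a product MDP applied to an additively
separable function decomposes into the sum of the sub-MDP Bellman optimality
operators: `(T V)(s) = ∑ i, (Tᵢ Vᵢ)(s i)` whenever `V(s) = ∑ i, Vᵢ(s i)`. -/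
theorem product_bellman_decomposes
    {ι : Type*} [Fintype ι] [DecidableEq ι] [Nonempty ι]
    (S A : ι → Type*)
    [∀ i, Fintype (S i)] [∀ i, Nonempty (S i)]
    [∀ i, Fintype (A i)] [∀ i, Nonempty (A i)]
    (P : ∀ i, S i → A i → S i → ℝ)
    (hP0 : ∀ i, ∀ (x : S i) (b : A i) (y : S i), 0 ≤ P i x b y)
    (hP1 : ∀ i, ∀ (x : S i) (b : A i), ∑ y : S i, P i x b y = 1)
    (J : ∀ i, S i → A i → ℝ)
    (γ : ℝ) (hγ0 : 0 ≤ γ) (hγ1 : γ < 1)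
    (V : ∀ i, S i → ℝ) :
    ∀ s : ∀ i, S i,
      -- `(T V)(s)` for the product MDP, applied to `V(s) = ∑ i, Vᵢ (s i)`:
      Finset.univ.inf' Finset.univ_nonempty
          (fun a : ∀ i, A i =>
            (∑ i, J i (s i) (a i)) +
              γ * ∑ s' : ∀ i, S i,
                (∏ i, P i (s i) (a i) (s' i)) * ∑ i, V i (s' i)) =
        -- `∑ i, (Tᵢ Vᵢ)(s i)` for the sub-MDPs:
        ∑ i, Finset.univ.inf' Finset.univ_nonempty
          (fun b : A i => J i (s i) b + γ * ∑ y : S i, P i (s i) b y * V i y) :=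
  product_bellman_decomposes_general S A P hP1 J γ V
end

section
/- Let ι be a nonempty finite index type and for each i ∈ ι let (S i, A i, P i, J i, γ) be a finite MDP with common discount factor γ ∈ [0,1). Let π_i : S i → A i be a stationary deterministic policy for the i-th sub-MDP with value function V_i^{π_i} (the unique fixed point of the local policy-evaluation operator). Define the product policy π on the product MDP by (π s) i = π_i (s i). Then the value function V^π of π in the product MDP satisfies V^π(s) = ∑_{i ∈ ι} V_i^{π_i}(s i) for all s ∈ ∏ i, S i. -/
/-!
The product policy's transition kernel has the local kernels `P i (s i) (π i (s i))` as its
marginals, so the expected next value of the summand `V_i(s' i)` only sees the `i`-th factor;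
hence `s ↦ ∑ i, V_i (s i)` is a fixed point of the product policy-evaluation operator. That
operator is a `γ`-contraction in the sup norm because the kernel rows are probability vectors,
so its fixed point is unique and equals `V^π`.
-/

open Finset Function

section PolicyEvaluation

variable {σ : Type*} [Fintype σ]

def policyEval (c : σ → ℝ) (Q : σ → σ → ℝ) (γ : ℝ) (V : σ → ℝ) : σ → ℝ :=
  fun s => c s + γ * ∑ s', Q s s' * V s'

theorem contractingWith_policyEval {c : σ → ℝ} {Q : σ → σ → ℝ} {γ : ℝ} (hγ0 : 0 ≤ γ)
    (hγ1 : γ < 1) (hQ0 : ∀ s s', 0 ≤ Q s s') (hQ1 : ∀ s, ∑ s', Q s s' ≤ 1) :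
    ContractingWith ⟨γ, hγ0⟩ (policyEval c Q γ) := by
  refine ⟨hγ1, LipschitzWith.of_dist_le_mul fun V W => ?_⟩
  refine (dist_pi_le_iff (by positivity)).2 fun s => ?_
  calc dist (policyEval c Q γ V s) (policyEval c Q γ W s)
      = γ * |∑ s', Q s s' * (V s' - W s')| := by
        simp only [policyEval, Real.dist_eq, add_sub_add_left_eq_sub, ← mul_sub,
          ← sum_sub_distrib, abs_mul, abs_of_nonneg hγ0]
    _ ≤ γ * ∑ s', Q s s' * dist V W := by
        gcongr
        refine (abs_sum_le_sum_abs _ _).trans (sum_le_sum fun s' _ => ?_)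
        rw [abs_mul, abs_of_nonneg (hQ0 s s'), ← Real.dist_eq]
        exact mul_le_mul_of_nonneg_left (dist_le_pi_dist V W s') (hQ0 s s')
    _ ≤ γ * dist V W := by
        rw [← sum_mul]
        gcongr
        exact mul_le_of_le_one_left dist_nonneg (hQ1 s)

end PolicyEvaluation

section ProductKernel

variable {ι : Type*} [Fintype ι] [DecidableEq ι] {S : ι → Type*} [∀ i, Fintype (S i)]

theorem sum_pi_prod_eq_one (p : ∀ i, S i → ℝ) (hp : ∀ i, ∑ y, p i y = 1) :
    ∑ x : ∀ i, S i, ∏ i, p i (x i) = 1 := by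
  simp [← Fintype.prod_sum, hp]

theorem sum_pi_prod_mul_apply (p : ∀ i, S i → ℝ) (hp : ∀ i, ∑ y, p i y = 1) (j : ι)
    (f : S j → ℝ) :
    ∑ x : ∀ i, S i, (∏ i, p i (x i)) * f (x j) = ∑ y, p j y * f y := by
  set q := update p j fun y => p j y * f y
  have hq (x : ∀ i, S i) : ∏ i, q i (x i) = (∏ i, p i (x i)) * f (x j) := by
    rw [← mul_prod_erase _ _ (mem_univ j), ← mul_prod_erase _ _ (mem_univ j),
      prod_congr rfl fun i hi => congrFun (update_of_ne (ne_of_mem_erase hi) _ p) (x i)]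
    simp only [q, update_self]
    ring
  calc ∑ x : ∀ i, S i, (∏ i, p i (x i)) * f (x j)
      = ∏ i, ∑ y, q i y := by simp only [← hq, Fintype.prod_sum]
    _ = ∑ y, p j y * f y := by
      rw [← mul_prod_erase _ _ (mem_univ j),
        prod_eq_one fun i hi => (congrArg _ (update_of_ne (ne_of_mem_erase hi) _ p)).trans (hp i)]
      simp only [q, update_self, mul_one]

theorem isFixedPt_policyEval_pi_sum {c : ∀ i, S i → ℝ} {Q : ∀ i, S i → S i → ℝ} {γ : ℝ}
    {V : ∀ i, S i → ℝ} (hQ1 : ∀ i x, ∑ y, Q i x y = 1)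
    (hV : ∀ i, IsFixedPt (policyEval (c i) (Q i) γ) (V i)) :
    IsFixedPt (policyEval (fun x : ∀ i, S i => ∑ i, c i (x i))
      (fun x x' : ∀ i, S i => ∏ i, Q i (x i) (x' i)) γ) (fun x => ∑ i, V i (x i)) := by
  funext x
  calc _ = ∑ i, c i (x i) + γ * ∑ i, ∑ y, Q i (x i) y * V i y := by
        rw [policyEval]
        congr 2
        simp_rw [mul_sum]
        rw [sum_comm]
        exact sum_congr rfl fun i _ => sum_pi_prod_mul_apply _ (fun i => hQ1 i (x i)) i (V i)
    _ = ∑ i, policyEval (c i) (Q i) γ (V i) (x i) := by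
        simp only [policyEval, sum_add_distrib, mul_sum]
    _ = ∑ i, V i (x i) := by simp only [fun i => congrFun (hV i) (x i)]

end ProductKernel

theorem product_policy_value_eq_sum_general
    {ι : Type*} [Fintype ι] [DecidableEq ι]
    (S A : ι → Type*)
    [∀ i, Fintype (S i)]
    (P : ∀ i, S i → A i → S i → ℝ)
    (hP0 : ∀ i, ∀ (x : S i) (b : A i) (y : S i), 0 ≤ P i x b y)
    (hP1 : ∀ i, ∀ (x : S i) (b : A i), ∑ y : S i, P i x b y = 1)
    (J : ∀ i, S i → A i → ℝ)
    (γ : ℝ) (hγ0 : 0 ≤ γ) (hγ1 : γ < 1)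
    -- local stationary deterministic policies:
    (π : ∀ i, S i → A i)
    -- `Viπ i` is the (unique) fixed point of the `i`-th local
    -- policy-evaluation operator, i.e. the value function of `π i`:
    (Viπ : ∀ i, S i → ℝ)
    (hViπ : ∀ i, ∀ x : S i,
      Viπ i x = J i x (π i x) + γ * ∑ y : S i, P i x (π i x) y * Viπ i y)
    -- `Vπ` is the (unique) fixed point of the policy-evaluation operator of
    -- the product policy `(π s) i = π i (s i)` in the product MDP:
    (Vπ : (∀ i, S i) → ℝ)
    (hVπ : ∀ s : ∀ i, S i,
      Vπ s = (∑ i, J i (s i) (π i (s i))) +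
        γ * ∑ s' : ∀ i, S i, (∏ i, P i (s i) (π i (s i)) (s' i)) * Vπ s') :
    ∀ s : ∀ i, S i, Vπ s = ∑ i, Viπ i (s i) := by
  have hT : ContractingWith ⟨γ, hγ0⟩
      (policyEval (fun s : ∀ i, S i => ∑ i, J i (s i) (π i (s i)))
        (fun s s' : ∀ i, S i => ∏ i, P i (s i) (π i (s i)) (s' i)) γ) :=
    contractingWith_policyEval hγ0 hγ1 (fun s s' => prod_nonneg fun i _ => hP0 i _ _ _)
      fun s => (sum_pi_prod_eq_one _ fun i => hP1 i (s i) _).le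
  have hsum := isFixedPt_policyEval_pi_sum (c := fun i x => J i x (π i x))
    (Q := fun i x => P i x (π i x)) (fun i x => hP1 i x _)
    fun i => funext fun x => (hViπ i x).symm
  exact congrFun (hT.fixedPoint_unique' (funext fun s => (hVπ s).symm) hsum)

/-- The value function of a product policy in a product MDP is the sum of the
value functions of the local policies in the sub-MDPs. -/
theorem product_policy_value_eq_sum
    {ι : Type*} [Fintype ι] [DecidableEq ι] [Nonempty ι]
    (S A : ι → Type*)
    [∀ i, Fintype (S i)] [∀ i, Nonempty (S i)]
    [∀ i, Fintype (A i)] [∀ i, Nonempty (A i)]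
    (P : ∀ i, S i → A i → S i → ℝ)
    (hP0 : ∀ i, ∀ (x : S i) (b : A i) (y : S i), 0 ≤ P i x b y)
    (hP1 : ∀ i, ∀ (x : S i) (b : A i), ∑ y : S i, P i x b y = 1)
    (J : ∀ i, S i → A i → ℝ)
    (γ : ℝ) (hγ0 : 0 ≤ γ) (hγ1 : γ < 1)
    -- local stationary deterministic policies:
    (π : ∀ i, S i → A i)
    -- `Viπ i` is the (unique) fixed point of the `i`-th local
    -- policy-evaluation operator, i.e. the value function of `π i`:
    (Viπ : ∀ i, S i → ℝ)
    (hViπ : ∀ i, ∀ x : S i,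
      Viπ i x = J i x (π i x) + γ * ∑ y : S i, P i x (π i x) y * Viπ i y)
    -- `Vπ` is the (unique) fixed point of the policy-evaluation operator of
    -- the product policy `(π s) i = π i (s i)` in the product MDP:
    (Vπ : (∀ i, S i) → ℝ)
    (hVπ : ∀ s : ∀ i, S i,
      Vπ s = (∑ i, J i (s i) (π i (s i))) +
        γ * ∑ s' : ∀ i, S i, (∏ i, P i (s i) (π i (s i)) (s' i)) * Vπ s') :
    ∀ s : ∀ i, S i, Vπ s = ∑ i, Viπ i (s i) :=
  product_policy_value_eq_sum_general S A P hP0 hP1 J γ hγ0 hγ1 π Viπ hViπ Vπ hVπ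
end

section
/- Let ι be a nonempty finite index type and for each i ∈ ι let (S i, A i, P i, J i, γ) be a finite MDP with common discount factor γ ∈ [0,1). Suppose for each i the policy π_i : S i → A i is optimal for the i-th sub-MDP, i.e., its value function V_i^{π_i} equals the local optimal value function V_i*. Then the product policy π on the product MDP, defined by (π s) i = π_i (s i), is optimal for the product MDP: its value function V^π equals the optimal value function V* of the product MDP, and moreover V*(s) = ∑_{i ∈ ι} V_i*(s i) for all s ∈ ∏ i, S i. -/
/-!
The sum `W s = ∑ i, Vᵢ*(s i)` of the local optimal values satisfies both the Bellman optimality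
equation and the policy-evaluation equation of the product policy in the product MDP. Indeed, under
the product kernel the expected value of `W` splits into the sum of the local expectations, so the
one-step cost of a joint action is a sum of terms each depending on one coordinate of the action,
and minimising over the product action space minimises each term separately. Both operators are
`γ`-contractions in the sup norm, so `V*` and `V^π` coincide with their unique fixed point `W`.
-/

open Finset Function

section Bellman

variable {σ α : Type*} [Fintype σ]

def qValue (P : σ → α → σ → ℝ) (c : σ → α → ℝ) (γ : ℝ) (V : σ → ℝ) (s : σ) (a : α) : ℝ :=
  c s a + γ * ∑ s', P s a s' * V s'

def bellmanOp [Fintype α] [Nonempty α] (P : σ → α → σ → ℝ) (c : σ → α → ℝ) (γ : ℝ)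
    (V : σ → ℝ) (s : σ) : ℝ :=
  univ.inf' univ_nonempty (qValue P c γ V s)

def policyEvalOp (P : σ → α → σ → ℝ) (c : σ → α → ℝ) (γ : ℝ) (π : σ → α) (V : σ → ℝ)
    (s : σ) : ℝ :=
  qValue P c γ V s (π s)

lemma abs_sum_mul_le_of_sum_eq_one {w d : σ → ℝ} {M : ℝ} (hw0 : ∀ s, 0 ≤ w s)
    (hw1 : ∑ s, w s = 1) (hd : ∀ s, |d s| ≤ M) : |∑ s, w s * d s| ≤ M :=
  calc |∑ s, w s * d s| ≤ ∑ s, |w s * d s| := abs_sum_le_sum_abs _ _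
    _ = ∑ s, w s * |d s| := sum_congr rfl fun s _ => by rw [abs_mul, abs_of_nonneg (hw0 s)]
    _ ≤ ∑ s, w s * M := sum_le_sum fun s _ => mul_le_mul_of_nonneg_left (hd s) (hw0 s)
    _ = M := by rw [← sum_mul, hw1, one_mul]

lemma Finset.abs_inf'_sub_inf'_le {β : Type*} {s : Finset β} (hs : s.Nonempty) {f g : β → ℝ}
    {M : ℝ} (h : ∀ b ∈ s, |f b - g b| ≤ M) : |s.inf' hs f - s.inf' hs g| ≤ M := by
  rw [abs_sub_le_iff]
  constructor
  · obtain ⟨b, hb, hgb⟩ := exists_mem_eq_inf' hs g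
    linarith [inf'_le f hb, (abs_sub_le_iff.mp (h b hb)).1]
  · obtain ⟨b, hb, hfb⟩ := exists_mem_eq_inf' hs f
    linarith [inf'_le g hb, (abs_sub_le_iff.mp (h b hb)).2]

lemma contractingWith_of_abs_sub_le {T : (σ → ℝ) → σ → ℝ} {γ : ℝ} (hγ0 : 0 ≤ γ) (hγ1 : γ < 1)
    (hT : ∀ V W s, |T V s - T W s| ≤ γ * dist V W) : ContractingWith γ.toNNReal T := by
  refine ⟨by simpa using hγ1, LipschitzWith.of_dist_le_mul fun V W => ?_⟩
  rw [Real.coe_toNNReal γ hγ0, dist_pi_le_iff (by positivity)]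
  exact fun s => (Real.dist_eq _ _).trans_le (hT V W s)

variable {P : σ → α → σ → ℝ} {c : σ → α → ℝ} {γ : ℝ}

lemma abs_qValue_sub_qValue_le (hP0 : ∀ s a s', 0 ≤ P s a s') (hP1 : ∀ s a, ∑ s', P s a s' = 1)
    (hγ0 : 0 ≤ γ) (V W : σ → ℝ) (s : σ) (a : α) :
    |qValue P c γ V s a - qValue P c γ W s a| ≤ γ * dist V W := by
  have hdiff : qValue P c γ V s a - qValue P c γ W s a = γ * ∑ s', P s a s' * (V s' - W s') := by
    simp only [qValue, mul_sub, sum_sub_distrib]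
    ring
  rw [hdiff, abs_mul, abs_of_nonneg hγ0]
  refine mul_le_mul_of_nonneg_left
    (abs_sum_mul_le_of_sum_eq_one (hP0 s a) (hP1 s a) fun s' => ?_) hγ0
  exact (Real.dist_eq _ _).symm.trans_le (dist_le_pi_dist V W s')

lemma contractingWith_bellmanOp [Fintype α] [Nonempty α] (hP0 : ∀ s a s', 0 ≤ P s a s')
    (hP1 : ∀ s a, ∑ s', P s a s' = 1) (hγ0 : 0 ≤ γ) (hγ1 : γ < 1) :
    ContractingWith γ.toNNReal (bellmanOp P c γ) :=
  contractingWith_of_abs_sub_le hγ0 hγ1 fun V W s =>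
    abs_inf'_sub_inf'_le _ fun a _ => abs_qValue_sub_qValue_le hP0 hP1 hγ0 V W s a

lemma contractingWith_policyEvalOp (hP0 : ∀ s a s', 0 ≤ P s a s')
    (hP1 : ∀ s a, ∑ s', P s a s' = 1) (hγ0 : 0 ≤ γ) (hγ1 : γ < 1) (π : σ → α) :
    ContractingWith γ.toNNReal (policyEvalOp P c γ π) :=
  contractingWith_of_abs_sub_le hγ0 hγ1 fun V W s =>
    abs_qValue_sub_qValue_le hP0 hP1 hγ0 V W s (π s)

end Bellman

section Product

variable {ι : Type*} [Fintype ι] {S A : ι → Type*}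

def prodKernel (P : ∀ i, S i → A i → S i → ℝ) (s : ∀ i, S i) (a : ∀ i, A i) (s' : ∀ i, S i) :
    ℝ :=
  ∏ i, P i (s i) (a i) (s' i)

def prodCost (J : ∀ i, S i → A i → ℝ) (s : ∀ i, S i) (a : ∀ i, A i) : ℝ :=
  ∑ i, J i (s i) (a i)

variable {P : ∀ i, S i → A i → S i → ℝ}

lemma prodKernel_nonneg (hP0 : ∀ i x b y, 0 ≤ P i x b y)
    (s : ∀ i, S i) (a : ∀ i, A i) (s' : ∀ i, S i) : 0 ≤ prodKernel P s a s' :=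
  prod_nonneg fun i _ => hP0 i (s i) (a i) (s' i)

variable [DecidableEq ι] [∀ i, Fintype (S i)]

lemma sum_prodKernel (hP1 : ∀ i x b, ∑ y, P i x b y = 1) (s : ∀ i, S i) (a : ∀ i, A i) :
    ∑ s', prodKernel P s a s' = 1 := by
  simp only [prodKernel, ← Fintype.prod_sum, hP1, prod_const_one]

lemma sum_prod_mul_apply {p : ∀ i, S i → ℝ} (hp : ∀ i, ∑ y, p i y = 1) (j : ι) (q : S j → ℝ) :
    ∑ x : ∀ i, S i, (∏ i, p i (x i)) * q (x j) = ∑ y, p j y * q y := by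
  -- absorb `q` into the `j`-th factor, then expand the product of sums
  set p' := update p j fun y => p j y * q y with hp'
  have hprod : ∀ x : ∀ i, S i, ∏ i, p' i (x i) = (∏ i, p i (x i)) * q (x j) := by
    intro x
    rw [← mul_prod_erase _ _ (mem_univ j), ← mul_prod_erase _ (fun i => p i (x i)) (mem_univ j),
      prod_congr rfl fun i hi => by rw [hp', update_of_ne (ne_of_mem_erase hi)]]
    simp only [p', update_self]
    ring
  simp_rw [← hprod, ← Fintype.prod_sum]
  rw [← mul_prod_erase _ _ (mem_univ j), prod_eq_one fun i hi => by
    rw [hp', update_of_ne (ne_of_mem_erase hi), hp i]]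
  simp [p']

lemma sum_prod_mul_sum_apply {p : ∀ i, S i → ℝ} (hp : ∀ i, ∑ y, p i y = 1) (V : ∀ i, S i → ℝ) :
    ∑ x : ∀ i, S i, (∏ i, p i (x i)) * ∑ j, V j (x j) = ∑ j, ∑ y, p j y * V j y := by
  simp_rw [mul_sum]
  rw [sum_comm]
  exact sum_congr rfl fun j _ => sum_prod_mul_apply hp j (V j)

lemma Finset.inf'_sum_pi_eq_sum_inf' [∀ i, Fintype (A i)] [∀ i, Nonempty (A i)]
    (f : ∀ i, A i → ℝ) :
    univ.inf' univ_nonempty (fun a : ∀ i, A i => ∑ i, f i (a i)) =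
      ∑ i, univ.inf' univ_nonempty (f i) := by
  refine le_antisymm ?_ (le_inf' _ _ fun a _ => sum_le_sum fun i _ => inf'_le _ (mem_univ _))
  choose b _ hb using fun i => exists_mem_eq_inf' univ_nonempty (f i)
  simpa only [hb] using inf'_le _ (mem_univ b)

lemma qValue_prod_sum (hP1 : ∀ i x b, ∑ y, P i x b y = 1) (J : ∀ i, S i → A i → ℝ) (γ : ℝ)
    (V : ∀ i, S i → ℝ) (s : ∀ i, S i) (a : ∀ i, A i) :
    qValue (prodKernel P) (prodCost J) γ (fun x => ∑ i, V i (x i)) s a =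
      ∑ i, qValue (P i) (J i) γ (V i) (s i) (a i) := by
  simp only [qValue, prodKernel, prodCost]
  rw [sum_prod_mul_sum_apply fun i => hP1 i (s i) (a i), mul_sum, ← sum_add_distrib]

lemma bellmanOp_prod_sum [∀ i, Fintype (A i)] [∀ i, Nonempty (A i)]
    (hP1 : ∀ i x b, ∑ y, P i x b y = 1) (J : ∀ i, S i → A i → ℝ) (γ : ℝ)
    (V : ∀ i, S i → ℝ) (s : ∀ i, S i) :
    bellmanOp (prodKernel P) (prodCost J) γ (fun x => ∑ i, V i (x i)) s =
      ∑ i, bellmanOp (P i) (J i) γ (V i) (s i) := by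
  simp only [bellmanOp, qValue_prod_sum hP1]
  exact inf'_sum_pi_eq_sum_inf' fun i => qValue (P i) (J i) γ (V i) (s i)

lemma policyEvalOp_prod_sum (hP1 : ∀ i x b, ∑ y, P i x b y = 1) (J : ∀ i, S i → A i → ℝ)
    (γ : ℝ) (π : ∀ i, S i → A i) (V : ∀ i, S i → ℝ) (s : ∀ i, S i) :
    policyEvalOp (prodKernel P) (prodCost J) γ (fun x i => π i (x i)) (fun x => ∑ i, V i (x i)) s =
      ∑ i, policyEvalOp (P i) (J i) γ (π i) (V i) (s i) :=
  qValue_prod_sum hP1 J γ V s _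

end Product

theorem product_policy_optimal_general
    {ι : Type*} [Fintype ι] [DecidableEq ι]
    (S A : ι → Type*)
    [∀ i, Fintype (S i)]
    [∀ i, Fintype (A i)] [∀ i, Nonempty (A i)]
    (P : ∀ i, S i → A i → S i → ℝ)
    (hP0 : ∀ i, ∀ (x : S i) (b : A i) (y : S i), 0 ≤ P i x b y)
    (hP1 : ∀ i, ∀ (x : S i) (b : A i), ∑ y : S i, P i x b y = 1)
    (J : ∀ i, S i → A i → ℝ)
    (γ : ℝ) (hγ0 : 0 ≤ γ) (hγ1 : γ < 1)
    -- `Vistar i` is the (unique) fixed point of the `i`-th local Bellman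
    -- optimality operator, i.e. the local optimal value function:
    (Vistar : ∀ i, S i → ℝ)
    (hVistar : ∀ i, ∀ x : S i,
      Vistar i x = Finset.univ.inf' Finset.univ_nonempty
        (fun b : A i => J i x b + γ * ∑ y : S i, P i x b y * Vistar i y))
    -- local stationary deterministic policies and their value functions
    -- (unique fixed points of the local policy-evaluation operators):
    (π : ∀ i, S i → A i)
    (Viπ : ∀ i, S i → ℝ)
    (hViπ : ∀ i, ∀ x : S i,
      Viπ i x = J i x (π i x) + γ * ∑ y : S i, P i x (π i x) y * Viπ i y)
    -- each local policy is optimal for its sub-MDP: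
    (hopt : ∀ i, ∀ x : S i, Viπ i x = Vistar i x)
    -- `Vstar` is the (unique) fixed point of the Bellman optimality operator
    -- of the product MDP, i.e. its optimal value function:
    (Vstar : (∀ i, S i) → ℝ)
    (hVstar : ∀ s : ∀ i, S i,
      Vstar s = Finset.univ.inf' Finset.univ_nonempty
        (fun a : ∀ i, A i =>
          (∑ i, J i (s i) (a i)) +
            γ * ∑ s' : ∀ i, S i, (∏ i, P i (s i) (a i) (s' i)) * Vstar s'))
    -- `Vπ` is the value function of the product policy `(π s) i = π i (s i)`
    -- in the product MDP (unique fixed point of its policy-evaluation operator):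
    (Vπ : (∀ i, S i) → ℝ)
    (hVπ : ∀ s : ∀ i, S i,
      Vπ s = (∑ i, J i (s i) (π i (s i))) +
        γ * ∑ s' : ∀ i, S i, (∏ i, P i (s i) (π i (s i)) (s' i)) * Vπ s') :
    (∀ s : ∀ i, S i, Vπ s = Vstar s) ∧
      ∀ s : ∀ i, S i, Vstar s = ∑ i, Vistar i (s i) := by
  have hVistar_pol : ∀ i x, Vistar i x = policyEvalOp (P i) (J i) γ (π i) (Vistar i) x := by
    simpa only [hopt, policyEvalOp, qValue] using hViπ
  set W : (∀ i, S i) → ℝ := fun s => ∑ i, Vistar i (s i)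
  have hW_opt : IsFixedPt (bellmanOp (prodKernel P) (prodCost J) γ) W := funext fun s => by
    rw [bellmanOp_prod_sum hP1]
    exact sum_congr rfl fun i _ => (hVistar i (s i)).symm
  have hW_pol : IsFixedPt (policyEvalOp (prodKernel P) (prodCost J) γ fun s i => π i (s i)) W :=
    funext fun s => by
      rw [policyEvalOp_prod_sum hP1]
      exact sum_congr rfl fun i _ => (hVistar_pol i (s i)).symm
  have hVstar_opt : IsFixedPt (bellmanOp (prodKernel P) (prodCost J) γ) Vstar :=
    funext fun s => (hVstar s).symm
  have hVπ_pol : IsFixedPt (policyEvalOp (prodKernel P) (prodCost J) γ fun s i => π i (s i)) Vπ :=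
    funext fun s => (hVπ s).symm
  have hVstar_eq : Vstar = W :=
    (contractingWith_bellmanOp (prodKernel_nonneg hP0) (sum_prodKernel hP1) hγ0
      hγ1).fixedPoint_unique' hVstar_opt hW_opt
  have hVπ_eq : Vπ = W :=
    (contractingWith_policyEvalOp (prodKernel_nonneg hP0) (sum_prodKernel hP1) hγ0 hγ1
      _).fixedPoint_unique' hVπ_pol hW_pol
  exact ⟨fun s => by rw [hVπ_eq, hVstar_eq], fun s => by rw [hVstar_eq]⟩

/-- Policy Equivalence under Probabilistic Independence (the paper's
Theorem 1): if each local policy `πᵢ` is optimal for its sub-MDP (its value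
function equals the local optimal value function `Vᵢ*`), then the product
policy `(π s) i = πᵢ (s i)` is optimal for the product MDP: its value function
equals the optimal value function `V*` of the product MDP, and moreover
`V*(s) = ∑ i, Vᵢ*(s i)`. -/
theorem product_policy_optimal
    {ι : Type*} [Fintype ι] [DecidableEq ι] [Nonempty ι]
    (S A : ι → Type*)
    [∀ i, Fintype (S i)] [∀ i, Nonempty (S i)]
    [∀ i, Fintype (A i)] [∀ i, Nonempty (A i)]
    (P : ∀ i, S i → A i → S i → ℝ)
    (hP0 : ∀ i, ∀ (x : S i) (b : A i) (y : S i), 0 ≤ P i x b y)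
    (hP1 : ∀ i, ∀ (x : S i) (b : A i), ∑ y : S i, P i x b y = 1)
    (J : ∀ i, S i → A i → ℝ)
    (γ : ℝ) (hγ0 : 0 ≤ γ) (hγ1 : γ < 1)
    -- `Vistar i` is the (unique) fixed point of the `i`-th local Bellman
    -- optimality operator, i.e. the local optimal value function:
    (Vistar : ∀ i, S i → ℝ)
    (hVistar : ∀ i, ∀ x : S i,
      Vistar i x = Finset.univ.inf' Finset.univ_nonempty
        (fun b : A i => J i x b + γ * ∑ y : S i, P i x b y * Vistar i y))
    -- local stationary deterministic policies and their value functions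
    -- (unique fixed points of the local policy-evaluation operators):
    (π : ∀ i, S i → A i)
    (Viπ : ∀ i, S i → ℝ)
    (hViπ : ∀ i, ∀ x : S i,
      Viπ i x = J i x (π i x) + γ * ∑ y : S i, P i x (π i x) y * Viπ i y)
    -- each local policy is optimal for its sub-MDP:
    (hopt : ∀ i, ∀ x : S i, Viπ i x = Vistar i x)
    -- `Vstar` is the (unique) fixed point of the Bellman optimality operator
    -- of the product MDP, i.e. its optimal value function:
    (Vstar : (∀ i, S i) → ℝ)
    (hVstar : ∀ s : ∀ i, S i,
      Vstar s = Finset.univ.inf' Finset.univ_nonempty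
        (fun a : ∀ i, A i =>
          (∑ i, J i (s i) (a i)) +
            γ * ∑ s' : ∀ i, S i, (∏ i, P i (s i) (a i) (s' i)) * Vstar s'))
    -- `Vπ` is the value function of the product policy `(π s) i = π i (s i)`
    -- in the product MDP (unique fixed point of its policy-evaluation operator):
    (Vπ : (∀ i, S i) → ℝ)
    (hVπ : ∀ s : ∀ i, S i,
      Vπ s = (∑ i, J i (s i) (π i (s i))) +
        γ * ∑ s' : ∀ i, S i, (∏ i, P i (s i) (π i (s i)) (s' i)) * Vπ s') :
    (∀ s : ∀ i, S i, Vπ s = Vstar s) ∧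
      ∀ s : ∀ i, S i, Vstar s = ∑ i, Vistar i (s i) :=
  product_policy_optimal_general S A P hP0 hP1 J γ hγ0 hγ1 Vistar hVistar π Viπ hViπ hopt Vstar
    hVstar Vπ hVπ
end
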